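/- Let Ω ⊆ ℝ³ be a bounded open set and let a, b, c : Ω → ℝ be twice continuously differentiable functions forming an orthogonal coordinate system on Ω (∇a · ∇b = ∇a · ∇c = ∇b · ∇c = 0 with Jacobian h = ∇a · (∇b × ∇c) nonvanishing on Ω) such that |∇a| = |∇b| on Ω. Let f : ℝ → ℝ be continuously differentiable. Then the vector field w = (1/√(1 + f(c)²)) ∇b + (f(c)/√(1 + f(c)²)) ∇a satisfies w × (curl w) = 0 on Ω, and curl w = σ |∇c| (f'(c)/(1 + f(c)²)) w on Ω, where σ(x) = h(x)/|h(x)| is the sign of the Jacobian; in particular w is a Beltrami field in Ω. -/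

import Mathlib

noncomputable section

abbrev R3 : Type := Fin 3 → ℝ

/-- Euclidean dot product on ℝ³. -/
def dot3 (u v : R3) : ℝ := u 0 * v 0 + u 1 * v 1 + u 2 * v 2

/-- Cross product on ℝ³. -/
def cross3 (u v : R3) : R3 :=
  ![u 1 * v 2 - u 2 * v 1, u 2 * v 0 - u 0 * v 2, u 0 * v 1 - u 1 * v 0]

/-- Euclidean norm on ℝ³. -/
def norm3 (u : R3) : ℝ := Real.sqrt (dot3 u u)

/-- Partial derivative of a scalar field in the `i`-th coordinate direction. -/
def pd (i : Fin 3) (f : R3 → ℝ) (x : R3) : ℝ := fderiv ℝ f x (Pi.single i 1)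

/-- Gradient of a scalar field. -/
def grad3 (f : R3 → ℝ) (x : R3) : R3 := fun i => pd i f x

/-- Curl of a vector field. -/
def curl3 (w : R3 → R3) (x : R3) : R3 :=
  ![pd 1 (fun y => w y 2) x - pd 2 (fun y => w y 1) x,
    pd 2 (fun y => w y 0) x - pd 0 (fun y => w y 2) x,
    pd 0 (fun y => w y 1) x - pd 1 (fun y => w y 0) x]

/-- Divergence of a vector field. -/
def div3 (w : R3 → R3) (x : R3) : ℝ :=
  pd 0 (fun y => w y 0) x + pd 1 (fun y => w y 1) x + pd 2 (fun y => w y 2) x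

/-- Laplacian of a scalar field. -/
def lap3 (f : R3 → ℝ) (x : R3) : ℝ := div3 (grad3 f) x


/-! With `τ = arctan (f ∘ c)` the field is `w = cos τ ∇b + sin τ ∇a`, and since
`curl (φ ∇g) = ∇φ × ∇g`, `curl w = ∇τ × (cos τ ∇a - sin τ ∇b)` with `∇τ = f'(c) / (1 + f(c)²) ∇c`.
For the orthogonal frame `∇a, ∇b, ∇c` with `|∇a| = |∇b|`, the map `∇c × ·` is `h / |∇a|²` times a
quarter turn of the plane of `∇a, ∇b`, and `|h| = |∇a|² |∇c|`; hence `curl w` is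
`σ |∇c| f'(c) / (1 + f(c)²)` times `w`. -/

open Real Topology Matrix

section VectorAlgebra

variable {u v z : R3}

lemma cross3_eq_crossProduct (u v : R3) : cross3 u v = u ⨯₃ v := rfl

lemma dot3_self_nonneg (u : R3) : 0 ≤ dot3 u u := by
  unfold dot3
  exact add_nonneg (add_nonneg (mul_self_nonneg _) (mul_self_nonneg _)) (mul_self_nonneg _)

lemma norm3_sq (u : R3) : norm3 u ^ 2 = dot3 u u :=
  sq_sqrt (dot3_self_nonneg u)

lemma dot3_comm (u v : R3) : dot3 u v = dot3 v u := by
  unfold dot3; ring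

lemma dot3_cross3_cycle (u v z : R3) : dot3 u (cross3 v z) = dot3 v (cross3 z u) := by
  simp only [dot3, cross3, cons_val_zero, cons_val_one, cons_val_two, head_cons, tail_cons]
  ring

lemma dot3_cross3_sq_of_orthogonal (huv : dot3 u v = 0) (huz : dot3 u z = 0)
    (hvz : dot3 v z = 0) : dot3 u (cross3 v z) ^ 2 = dot3 u u * dot3 v v * dot3 z z := by
  simp only [dot3, cross3, cons_val_zero, cons_val_one, cons_val_two, head_cons,
    tail_cons] at *
  linear_combination (2*(u 0*z 0+u 1*z 1+u 2*z 2)*(v 0*z 0+v 1*z 1+v 2*z 2)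
      - (z 0^2+z 1^2+z 2^2)*(u 0*v 0+u 1*v 1+u 2*v 2)) * huv
    + (-(v 0^2+v 1^2+v 2^2)*(u 0*z 0+u 1*z 1+u 2*z 2)) * huz
    + (-(u 0^2+u 1^2+u 2^2)*(v 0*z 0+v 1*z 1+v 2*z 2)) * hvz

lemma abs_dot3_cross3_of_orthogonal (huv : dot3 u v = 0) (huz : dot3 u z = 0)
    (hvz : dot3 v z = 0) : |dot3 u (cross3 v z)| = norm3 u * norm3 v * norm3 z := by
  rw [← sqrt_sq_eq_abs, dot3_cross3_sq_of_orthogonal huv huz hvz, norm3, norm3, norm3,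
    sqrt_mul (mul_nonneg (dot3_self_nonneg u) (dot3_self_nonneg v)),
    sqrt_mul (dot3_self_nonneg u)]

lemma dot3_self_smul_cross3_of_orthogonal (huv : dot3 u v = 0)
    (huz : dot3 u z = 0) : dot3 u u • cross3 v z = dot3 u (cross3 v z) • u := by
  simp only [dot3] at huv huz
  ext i
  fin_cases i <;>
    simp only [dot3, cross3, Fin.isValue, Fin.zero_eta, Fin.mk_one, Fin.reduceFinMk,
      Pi.smul_apply, smul_eq_mul, cons_val_zero, cons_val_one, cons_val]
  · linear_combination (u 2 * v 1 - u 1 * v 2) * huz + (u 1 * z 2 - u 2 * z 1) * huv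
  · linear_combination (u 0 * v 2 - u 2 * v 0) * huz + (u 2 * z 0 - u 0 * z 2) * huv
  · linear_combination (u 1 * v 0 - u 0 * v 1) * huz + (u 0 * z 1 - u 1 * z 0) * huv

lemma cross3_rotate_of_orthogonal (huv : dot3 u v = 0) (huz : dot3 u z = 0)
    (hvz : dot3 v z = 0) (hjac : dot3 u (cross3 v z) ≠ 0) (hnorm : norm3 u = norm3 v)
    (s t : ℝ) :
    cross3 z (s • u - t • v) =
      (dot3 u (cross3 v z) / |dot3 u (cross3 v z)| * norm3 z) • (s • v + t • u) := by
  set h := dot3 u (cross3 v z)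
  have huu : dot3 u u = dot3 v v := by rw [← norm3_sq, ← norm3_sq, hnorm]
  have hD : dot3 u u ≠ 0 := by
    rintro hD
    exact hjac (pow_eq_zero_iff two_ne_zero |>.mp (by
      rw [dot3_cross3_sq_of_orthogonal huv huz hvz, hD, zero_mul, zero_mul]))
  have hzu : dot3 u u • cross3 z u = h • v := by
    rw [huu, dot3_self_smul_cross3_of_orthogonal hvz (by rwa [dot3_comm]),
      ← dot3_cross3_cycle]
  have hzv : dot3 u u • cross3 z v = -h • u := by
    rw [cross3_eq_crossProduct, ← cross_anticomm, smul_neg, ← cross3_eq_crossProduct,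
      dot3_self_smul_cross3_of_orthogonal huv huz, neg_smul]
  have hscale : h / |h| * norm3 z = h / dot3 u u := by
    have hz : norm3 z ≠ 0 := by
      intro hz; apply hjac; rw [← abs_eq_zero, abs_dot3_cross3_of_orthogonal huv huz hvz, hz,
        mul_zero]
    rw [abs_dot3_cross3_of_orthogonal huv huz hvz, ← hnorm, ← norm3_sq]
    field_simp
  rw [hscale]
  apply smul_right_injective R3 hD
  simp only [smul_smul, mul_div_cancel₀ _ hD]
  rw [cross3_eq_crossProduct, map_sub, map_smul, map_smul, ← cross3_eq_crossProduct,
    ← cross3_eq_crossProduct]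
  linear_combination (norm := module) s • hzu - t • hzv

end VectorAlgebra

section VectorCalculus

variable {x : R3}

lemma pd_congr {f g : R3 → ℝ} (h : f =ᶠ[𝓝 x] g) (i : Fin 3) :
    pd i f x = pd i g x := by
  rw [pd, pd, h.fderiv_eq]

lemma pd_add {f g : R3 → ℝ} (hf : DifferentiableAt ℝ f x)
    (hg : DifferentiableAt ℝ g x) (i : Fin 3) :
    pd i (fun y => f y + g y) x = pd i f x + pd i g x := by
  simp [pd, fderiv_fun_add hf hg]

lemma pd_mul {f g : R3 → ℝ} (hf : DifferentiableAt ℝ f x)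
    (hg : DifferentiableAt ℝ g x) (i : Fin 3) :
    pd i (fun y => f y * g y) x = pd i f x * g x + f x * pd i g x := by
  simp only [pd, fderiv_fun_mul hf hg, _root_.add_apply, _root_.smul_apply, smul_eq_mul]
  ring

lemma differentiableAt_pd {g : R3 → ℝ} (hg : ContDiffAt ℝ 2 g x) (j : Fin 3) :
    DifferentiableAt ℝ (pd j g) x :=
  ((hg.fderiv_right (m := 1) one_add_one_eq_two.le).differentiableAt one_ne_zero).clm_apply
    (differentiableAt_const _)

lemma pd_pd_comm {g : R3 → ℝ} (hg : ContDiffAt ℝ 2 g x) (i j : Fin 3) :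
    pd i (pd j g) x = pd j (pd i g) x := by
  have hg' : DifferentiableAt ℝ (fderiv ℝ g) x :=
    (hg.fderiv_right (m := 1) one_add_one_eq_two.le).differentiableAt one_ne_zero
  have hpd : ∀ k l, pd k (pd l g) x = fderiv ℝ (fderiv ℝ g) x (Pi.single k 1) (Pi.single l 1) := by
    intro k l
    change fderiv ℝ (fun y => fderiv ℝ g y (Pi.single l 1)) x (Pi.single k 1) = _
    simp [fderiv_clm_apply hg' (differentiableAt_const _)]
  rw [hpd, hpd, hg.isSymmSndFDerivAt (by simp [minSmoothness_of_isRCLikeNormedField])]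

lemma grad3_comp {k : ℝ → ℝ} {k' : ℝ} {g : R3 → ℝ} (hk : HasDerivAt k k' (g x))
    (hg : DifferentiableAt ℝ g x) : grad3 (fun y => k (g y)) x = k' • grad3 g x := by
  ext i
  simp [grad3, pd, ← Function.comp_def k g, (hk.comp_hasFDerivAt x hg.hasFDerivAt).fderiv]

lemma curl3_congr {v w : R3 → R3} (h : v =ᶠ[𝓝 x] w) : curl3 v x = curl3 w x := by
  have hc : ∀ j, (fun y => v y j) =ᶠ[𝓝 x] fun y => w y j := fun j => h.fun_comp (· j)
  simp only [curl3, pd_congr (hc _)]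

lemma curl3_add {v w : R3 → R3} (hv : ∀ j, DifferentiableAt ℝ (fun y => v y j) x)
    (hw : ∀ j, DifferentiableAt ℝ (fun y => w y j) x) :
    curl3 (fun y => v y + w y) x = curl3 v x + curl3 w x := by
  simp only [curl3, Pi.add_apply, pd_add (hv _) (hw _)]
  ext i
  fin_cases i <;> simp <;> ring

lemma differentiableAt_smul_grad3_apply {φ g : R3 → ℝ}
    (hφ : DifferentiableAt ℝ φ x) (hg : ContDiffAt ℝ 2 g x) (j : Fin 3) :
    DifferentiableAt ℝ (fun y => (φ y • grad3 g y) j) x :=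
  hφ.mul (differentiableAt_pd hg j)

/-- The product rule, plus `curl ∇g = 0` from the symmetry of second derivatives. -/
lemma curl3_smul_grad3 {φ g : R3 → ℝ} (hφ : DifferentiableAt ℝ φ x)
    (hg : ContDiffAt ℝ 2 g x) :
    curl3 (fun y => φ y • grad3 g y) x = cross3 (grad3 φ x) (grad3 g x) := by
  have hpd := differentiableAt_pd hg
  simp only [curl3, cross3, grad3, Pi.smul_apply, smul_eq_mul]
  simp only [pd_mul hφ (hpd _), pd_pd_comm hg 1 2, pd_pd_comm hg 2 0, pd_pd_comm hg 0 1]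
  ext i
  fin_cases i <;> simp [mul_comm]

lemma curl3_cos_smul_grad3_add_sin_smul_grad3 {θ a b : R3 → ℝ}
    (hθ : DifferentiableAt ℝ θ x) (ha : ContDiffAt ℝ 2 a x) (hb : ContDiffAt ℝ 2 b x) :
    curl3 (fun y => cos (θ y) • grad3 b y + sin (θ y) • grad3 a y) x =
      cross3 (grad3 θ x) (cos (θ x) • grad3 a x - sin (θ x) • grad3 b x) := by
  have hcos : DifferentiableAt ℝ (fun y => cos (θ y)) x := hθ.cos
  have hsin : DifferentiableAt ℝ (fun y => sin (θ y)) x := hθ.sin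
  rw [curl3_add (differentiableAt_smul_grad3_apply hcos hb)
      (differentiableAt_smul_grad3_apply hsin ha), curl3_smul_grad3 hcos hb,
    curl3_smul_grad3 hsin ha, grad3_comp (hasDerivAt_cos (θ x)) hθ,
    grad3_comp (hasDerivAt_sin (θ x)) hθ]
  simp only [cross3_eq_crossProduct, map_smul, map_sub, LinearMap.smul_apply]
  module

end VectorCalculus

theorem beltrami_construction_arctan_general
    (Ω : Set R3) (hΩopen : IsOpen Ω)
    (a b c : R3 → ℝ)
    (ha : ContDiffOn ℝ 2 a Ω) (hb : ContDiffOn ℝ 2 b Ω) (hc : ContDiffOn ℝ 2 c Ω)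
    (horth1 : ∀ x ∈ Ω, dot3 (grad3 a x) (grad3 b x) = 0)
    (horth2 : ∀ x ∈ Ω, dot3 (grad3 a x) (grad3 c x) = 0)
    (horth3 : ∀ x ∈ Ω, dot3 (grad3 b x) (grad3 c x) = 0)
    (hjac : ∀ x ∈ Ω, dot3 (grad3 a x) (cross3 (grad3 b x) (grad3 c x)) ≠ 0)
    (hnorm : ∀ x ∈ Ω, norm3 (grad3 a x) = norm3 (grad3 b x))
    (f : ℝ → ℝ) (hf : ContDiff ℝ 1 f)
    (w : R3 → R3)
    (hw : ∀ x ∈ Ω,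
      w x = (1 / Real.sqrt (1 + f (c x) ^ 2)) • grad3 b x +
        (f (c x) / Real.sqrt (1 + f (c x) ^ 2)) • grad3 a x) :
    ∀ x ∈ Ω,
      cross3 (w x) (curl3 w x) = 0 ∧
      curl3 w x =
        ((dot3 (grad3 a x) (cross3 (grad3 b x) (grad3 c x)) /
            |dot3 (grad3 a x) (cross3 (grad3 b x) (grad3 c x))|) *
          norm3 (grad3 c x) * (deriv f (c x) / (1 + f (c x) ^ 2))) • w x := by
  intro x hx
  have hxΩ := hΩopen.mem_nhds hx
  have hc' : DifferentiableAt ℝ c x := (hc.contDiffAt hxΩ).differentiableAt two_ne_zero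
  have hτ : HasDerivAt (fun s => arctan (f s)) (deriv f (c x) / (1 + f (c x) ^ 2)) (c x) := by
    simpa [div_eq_inv_mul] using (hf.differentiable one_ne_zero (c x)).hasDerivAt.arctan
  have hθ : DifferentiableAt ℝ (fun y => arctan (f (c y))) x := hτ.differentiableAt.comp x hc'
  have hw_eq : w =ᶠ[𝓝 x]
      fun y => cos (arctan (f (c y))) • grad3 b y + sin (arctan (f (c y))) • grad3 a y := by
    filter_upwards [hxΩ] with y hy
    rw [hw y hy, cos_arctan, sin_arctan]
  have hbel : curl3 w x = ((dot3 (grad3 a x) (cross3 (grad3 b x) (grad3 c x)) /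
            |dot3 (grad3 a x) (cross3 (grad3 b x) (grad3 c x))|) *
          norm3 (grad3 c x) * (deriv f (c x) / (1 + f (c x) ^ 2))) • w x := by
    rw [curl3_congr hw_eq,
      curl3_cos_smul_grad3_add_sin_smul_grad3 hθ (ha.contDiffAt hxΩ) (hb.contDiffAt hxΩ),
      grad3_comp hτ hc', cross3_eq_crossProduct, map_smul, LinearMap.smul_apply,
      ← cross3_eq_crossProduct, cross3_rotate_of_orthogonal (horth1 x hx) (horth2 x hx)
        (horth3 x hx) (hjac x hx) (hnorm x hx), ← hw_eq.eq_of_nhds, smul_smul, mul_comm]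
  refine ⟨?_, hbel⟩
  rw [hbel, cross3_eq_crossProduct, map_smul, cross_self, smul_zero]

/-- Beltrami field obtained from an orthogonal coordinate system `(a, b, c)` with
`|∇a| = |∇b|` and a C¹ function `f` of the coordinate `c`. -/
theorem beltrami_construction_arctan
    (Ω : Set R3) (hΩopen : IsOpen Ω) (hΩbdd : Bornology.IsBounded Ω)
    (a b c : R3 → ℝ)
    (ha : ContDiffOn ℝ 2 a Ω) (hb : ContDiffOn ℝ 2 b Ω) (hc : ContDiffOn ℝ 2 c Ω)
    (horth1 : ∀ x ∈ Ω, dot3 (grad3 a x) (grad3 b x) = 0)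
    (horth2 : ∀ x ∈ Ω, dot3 (grad3 a x) (grad3 c x) = 0)
    (horth3 : ∀ x ∈ Ω, dot3 (grad3 b x) (grad3 c x) = 0)
    (hjac : ∀ x ∈ Ω, dot3 (grad3 a x) (cross3 (grad3 b x) (grad3 c x)) ≠ 0)
    (hnorm : ∀ x ∈ Ω, norm3 (grad3 a x) = norm3 (grad3 b x))
    (f : ℝ → ℝ) (hf : ContDiff ℝ 1 f)
    (w : R3 → R3)
    (hw : ∀ x ∈ Ω,
      w x = (1 / Real.sqrt (1 + f (c x) ^ 2)) • grad3 b x +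
        (f (c x) / Real.sqrt (1 + f (c x) ^ 2)) • grad3 a x) :
    ∀ x ∈ Ω,
      cross3 (w x) (curl3 w x) = 0 ∧
      curl3 w x =
        ((dot3 (grad3 a x) (cross3 (grad3 b x) (grad3 c x)) /
            |dot3 (grad3 a x) (cross3 (grad3 b x) (grad3 c x))|) *
          norm3 (grad3 c x) * (deriv f (c x) / (1 + f (c x) ^ 2))) • w x :=
  beltrami_construction_arctan_general Ω hΩopen a b c ha hb hc horth1 horth2 horth3 hjac hnorm f hf
    w hw
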